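/- Let a_ε(τ) = 0 for τ ≤ 0, a_ε(τ) = τ/ε for 0 ≤ τ ≤ ε, and a_ε(τ) = 1 for τ ≥ ε. Let φ : ℝ² → ℝ be bounded. Then limsup as ε → 0⁺ of ∫∫_{ℝ²} φ(s, a_ε(τ)s²/2 + τ)² · a_ε'(τ) / ((1 + a_ε(τ)²)^{3/2} · (a_ε'(τ)s²/2 + 1)) ds dτ ≤ 0; in fact the integral is bounded by C·√ε · sup φ² for an absolute constant C. -/

import Mathlib

open MeasureTheory Filter

/-- The piecewise affine function a_ε. -/
noncomputable def ae11 (ε τ : ℝ) : ℝ := if τ ≤ 0 then 0 else if τ ≤ ε then τ / ε else 1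

/-- Its (a.e.) derivative a_ε'. -/
noncomputable def dae11 (ε τ : ℝ) : ℝ := if 0 < τ ∧ τ < ε then 1 / ε else 0

/-- The second-variation error integral. -/
noncomputable def I11 (φ : ℝ × ℝ → ℝ) (ε : ℝ) : ℝ :=
  ∫ p : ℝ × ℝ, φ (p.1, ae11 ε p.2 * p.1 ^ 2 / 2 + p.2) ^ 2 * dae11 ε p.2 /
    ((1 + ae11 ε p.2 ^ 2) ^ ((3 : ℝ) / 2) * (dae11 ε p.2 * p.1 ^ 2 / 2 + 1))

/-!
On the strip `0 < τ < ε` the integrand is at most `M / ε · (1 + s² / (2ε))⁻¹` (the factor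
`(1 + a_ε²)^{3/2}` is at least `1`), and it vanishes elsewhere. The Cauchy profile
`(1 + s² / (2ε))⁻¹` has integral `π √(2ε)`, so the whole integral is at most `π √2 · √ε · M`.
-/

open Real

lemma integral_inv_one_add_sq_div {c : ℝ} (hc : 0 < c) :
    ∫ x : ℝ, (1 + (x / c) ^ 2)⁻¹ = π * c := by
  rw [Measure.integral_comp_div (fun x => (1 + x ^ 2)⁻¹) c, integral_univ_inv_one_add_sq,
    abs_of_pos hc, smul_eq_mul, mul_comm]

lemma integral_indicator_Ioo_inv {ε : ℝ} (hε : 0 < ε) :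
    ∫ t : ℝ, (Set.Ioo 0 ε).indicator (fun _ => 1 / ε) t = 1 := by
  rw [integral_indicator_const _ measurableSet_Ioo, measureReal_def, Real.volume_Ioo,
    ENNReal.toReal_ofReal (by linarith), smul_eq_mul]
  field_simp
  ring

lemma dae11_nonneg (ε τ : ℝ) : 0 ≤ dae11 ε τ := by
  unfold dae11
  split_ifs with h
  · have : 0 < ε := h.1.trans h.2
    positivity
  · exact le_rfl

lemma dae11_of_mem_Ioo {ε τ : ℝ} (h : τ ∈ Set.Ioo 0 ε) : dae11 ε τ = 1 / ε := if_pos h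

lemma dae11_of_notMem_Ioo {ε τ : ℝ} (h : τ ∉ Set.Ioo 0 ε) : dae11 ε τ = 0 := if_neg h

lemma integrand11_nonneg (φ : ℝ × ℝ → ℝ) (ε : ℝ) (p : ℝ × ℝ) :
    0 ≤ φ (p.1, ae11 ε p.2 * p.1 ^ 2 / 2 + p.2) ^ 2 * dae11 ε p.2 /
      ((1 + ae11 ε p.2 ^ 2) ^ ((3 : ℝ) / 2) * (dae11 ε p.2 * p.1 ^ 2 / 2 + 1)) := by
  have := dae11_nonneg ε p.2
  positivity

lemma I11_nonneg (φ : ℝ × ℝ → ℝ) (ε : ℝ) : 0 ≤ I11 φ ε :=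
  integral_nonneg fun p => integrand11_nonneg φ ε p

lemma integrand11_le_cauchy_mul_indicator {φ : ℝ × ℝ → ℝ} {M : ℝ} (hM : ∀ p, φ p ^ 2 ≤ M)
    {ε : ℝ} (hε : 0 < ε) (p : ℝ × ℝ) :
    φ (p.1, ae11 ε p.2 * p.1 ^ 2 / 2 + p.2) ^ 2 * dae11 ε p.2 /
        ((1 + ae11 ε p.2 ^ 2) ^ ((3 : ℝ) / 2) * (dae11 ε p.2 * p.1 ^ 2 / 2 + 1)) ≤
      M * (1 + (p.1 / √(2 * ε)) ^ 2)⁻¹ * (Set.Ioo 0 ε).indicator (fun _ => 1 / ε) p.2 := by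
  obtain ⟨s, τ⟩ := p
  by_cases hτ : τ ∈ Set.Ioo 0 ε
  · have hden : 1 / ε * s ^ 2 / 2 + 1 = 1 + (s / √(2 * ε)) ^ 2 := by
      rw [div_pow, sq_sqrt (by positivity)]
      field_simp
      ring
    have hone : (1 : ℝ) ≤ (1 + ae11 ε τ ^ 2) ^ ((3 : ℝ) / 2) :=
      one_le_rpow (le_add_of_nonneg_right (sq_nonneg _)) (by norm_num)
    simp only [dae11_of_mem_Ioo hτ, Set.indicator_of_mem hτ, hden]
    calc φ (s, ae11 ε τ * s ^ 2 / 2 + τ) ^ 2 * (1 / ε) /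
          ((1 + ae11 ε τ ^ 2) ^ ((3 : ℝ) / 2) * (1 + (s / √(2 * ε)) ^ 2))
        ≤ M * (1 / ε) / (1 * (1 + (s / √(2 * ε)) ^ 2)) := by
          have hM0 : 0 ≤ M := (sq_nonneg _).trans (hM (0, 0))
          gcongr
          exact hM _
      _ = M * (1 + (s / √(2 * ε)) ^ 2)⁻¹ * (1 / ε) := by ring
  · simp [dae11_of_notMem_Ioo hτ, Set.indicator_of_notMem hτ]

lemma I11_le (φ : ℝ × ℝ → ℝ) (M : ℝ) (hM : ∀ p, φ p ^ 2 ≤ M) {ε : ℝ} (hε : 0 < ε) :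
    I11 φ ε ≤ √2 * π * √ε * M := by
  have hc : 0 < √(2 * ε) := sqrt_pos.2 (by positivity)
  have hmajorant : Integrable (fun p : ℝ × ℝ =>
      M * (1 + (p.1 / √(2 * ε)) ^ 2)⁻¹ * (Set.Ioo 0 ε).indicator (fun _ => 1 / ε) p.2) := by
    rw [Measure.volume_eq_prod]
    refine ((integrable_inv_one_add_sq.comp_div hc.ne').const_mul M).mul_prod ?_
    exact (integrableOn_const (by simp [Real.volume_Ioo])).integrable_indicator measurableSet_Ioo
  calc I11 φ ε
      ≤ ∫ p : ℝ × ℝ,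
          M * (1 + (p.1 / √(2 * ε)) ^ 2)⁻¹ * (Set.Ioo 0 ε).indicator (fun _ => 1 / ε) p.2 :=
        integral_mono_of_nonneg (.of_forall (integrand11_nonneg φ ε)) hmajorant
          (.of_forall (integrand11_le_cauchy_mul_indicator hM hε))
    _ = M * (π * √(2 * ε)) := by
        rw [Measure.volume_eq_prod, integral_prod_mul (fun s => M * (1 + (s / √(2 * ε)) ^ 2)⁻¹),
          integral_const_mul, integral_inv_one_add_sq_div hc, integral_indicator_Ioo_inv hε,
          mul_one]
    _ = √2 * π * √ε * M := by rw [sqrt_mul zero_le_two]; ring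

theorem stmt_11 (φ : ℝ × ℝ → ℝ) (M : ℝ) (hM : ∀ p, φ p ^ 2 ≤ M) :
    (∃ C : ℝ, 0 < C ∧ ∀ ε : ℝ, 0 < ε → I11 φ ε ≤ C * Real.sqrt ε * M) ∧
    Filter.limsup (I11 φ) (nhdsWithin 0 (Set.Ioi 0)) ≤ 0 := by
  refine ⟨⟨√2 * π, by positivity, fun ε hε => I11_le φ M hM hε⟩, le_of_eq ?_⟩
  have hbound : Tendsto (fun ε => √2 * π * √ε * M) (nhdsWithin 0 (Set.Ioi 0)) (nhds 0) := by
    have hcont : Continuous fun ε => √2 * π * √ε * M := by fun_prop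
    exact tendsto_nhdsWithin_of_tendsto_nhds (hcont.tendsto' 0 0 (by simp))
  refine (tendsto_of_tendsto_of_tendsto_of_le_of_le' tendsto_const_nhds hbound
    (.of_forall (I11_nonneg φ)) ?_).limsup_eq
  filter_upwards [self_mem_nhdsWithin] with ε hε using I11_le φ M hM hε
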